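/- arXiv:2111.06824 — 3 statements merged into one kernel-verified Lean document; each statement's English description precedes it below -/
import Mathlib

section
/- Suppose x ∈ ℤ^{n₁} and ŷ ∈ Y ∩ ℤ^{n₂}. If a⋅x > f − b⋅ŷ − 1, then a⋅x ≥ f − b⋅ŷ (so ŷ ∈ F(x)); consequently, for every y with q(y) > q(ŷ), the point y is not an optimal follower response to x. (In other words, under integrality of x, a, b, ŷ and f, the interior of the extended set S⁺(ŷ) = {(x,y) : a⋅x ≥ f − b⋅ŷ − 1, q(y) ≥ q(ŷ)} contains no bilevel feasible solution with integer x.) -/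
/-- The follower feasible set `F(x) = {y ∈ Y : y ∈ ℤ^{n₂}, a⋅x + b⋅y ≥ f}`. -/
def followerFeasible {n₁ n₂ : ℕ} (a : Fin n₁ → ℤ) (b : Fin n₂ → ℤ) (f : ℤ)
    (Y : Set (Fin n₂ → ℝ)) (x : Fin n₁ → ℝ) : Set (Fin n₂ → ℝ) :=
  {y | y ∈ Y ∧ (∀ i, ∃ k : ℤ, y i = (k : ℝ)) ∧
      (f : ℝ) ≤ ∑ i, (a i : ℝ) * x i + ∑ i, (b i : ℝ) * y i}

/-- `y` is an optimal follower response to `x`. -/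
def isOptimalResponse {n₁ n₂ : ℕ} (a : Fin n₁ → ℤ) (b : Fin n₂ → ℤ) (f : ℤ)
    (Y : Set (Fin n₂ → ℝ)) (q : (Fin n₂ → ℝ) → ℝ) (x : Fin n₁ → ℝ)
    (y : Fin n₂ → ℝ) : Prop :=
  y ∈ followerFeasible a b f Y x ∧
    ∀ y' ∈ followerFeasible a b f Y x, q y ≤ q y'

/-- If `x` is integer, `ŷ ∈ Y ∩ ℤ^{n₂}` and `a⋅x > f − b⋅ŷ − 1`, then
`a⋅x ≥ f − b⋅ŷ` (so `ŷ ∈ F(x)`), and consequently every `y` with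
`q(y) > q(ŷ)` is not an optimal follower response to `x`. -/
theorem stmt_1 {n₁ n₂ : ℕ} (a : Fin n₁ → ℤ) (b : Fin n₂ → ℤ) (f : ℤ)
    (Y : Set (Fin n₂ → ℝ)) (q : (Fin n₂ → ℝ) → ℝ)
    (x : Fin n₁ → ℝ) (hx : ∀ i, ∃ k : ℤ, x i = (k : ℝ))
    (yhat : Fin n₂ → ℝ) (hyhatY : yhat ∈ Y)
    (hyhatInt : ∀ i, ∃ k : ℤ, yhat i = (k : ℝ))
    (hstrict : ∑ i, (a i : ℝ) * x i > (f : ℝ) - ∑ i, (b i : ℝ) * yhat i - 1) :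
    (∑ i, (a i : ℝ) * x i ≥ (f : ℝ) - ∑ i, (b i : ℝ) * yhat i) ∧
      yhat ∈ followerFeasible a b f Y x ∧
      ∀ y : Fin n₂ → ℝ, q y > q yhat → ¬ isOptimalResponse a b f Y q x y := by
  choose X hX using hx
  choose Yh hYh using hyhatInt
  have hax : ∑ i, (a i : ℝ) * x i = ((∑ i, a i * X i : ℤ) : ℝ) := by
    push_cast; exact Finset.sum_congr rfl fun i _ => by rw [hX i]
  have hby : ∑ i, (b i : ℝ) * yhat i = ((∑ i, b i * Yh i : ℤ) : ℝ) := by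
    push_cast; exact Finset.sum_congr rfl fun i _ => by rw [hYh i]
  have hge : ∑ i, (a i : ℝ) * x i ≥ (f : ℝ) - ∑ i, (b i : ℝ) * yhat i := by
    rw [hax, hby] at hstrict ⊢
    have : (f - ∑ i, b i * Yh i : ℤ) - 1 < (∑ i, a i * X i : ℤ) := by
      exact_mod_cast hstrict
    have h2 : (f - ∑ i, b i * Yh i : ℤ) ≤ (∑ i, a i * X i : ℤ) := by omega
    exact_mod_cast h2
  have hmem : yhat ∈ followerFeasible a b f Y x :=
    ⟨hyhatY, fun i => ⟨Yh i, hYh i⟩, by linarith⟩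
  exact ⟨hge, hmem, fun y hq ⟨_, hopt⟩ => absurd (hopt yhat hmem) (not_le.mpr hq)⟩
end

section
/- Let x ∈ ℤ^{n₁} and let y be an optimal follower response to x. Then for every ŷ ∈ Y ∩ ℤ^{n₂}, the disjunction D₁(ŷ) ∨ D₂(ŷ) holds: either a⋅x ≤ f − b⋅ŷ − 1, or q(y) ≤ q(ŷ). (Every bilevel feasible solution with integer leader decision satisfies the disjunction D₁(ŷ) ∨ D₂(ŷ).) -/
/-- Every bilevel feasible solution with integer leader decision satisfies the
disjunction `D₁(ŷ) ∨ D₂(ŷ)` for every `ŷ ∈ Y ∩ ℤ^{n₂}`. -/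
theorem stmt_2 {n₁ n₂ : ℕ} (a : Fin n₁ → ℤ) (b : Fin n₂ → ℤ) (f : ℤ)
    (Y : Set (Fin n₂ → ℝ)) (q : (Fin n₂ → ℝ) → ℝ)
    (x : Fin n₁ → ℝ) (hx : ∀ i, ∃ k : ℤ, x i = (k : ℝ))
    (y : Fin n₂ → ℝ) (hy : isOptimalResponse a b f Y q x y) :
    ∀ yhat : Fin n₂ → ℝ, yhat ∈ Y → (∀ i, ∃ k : ℤ, yhat i = (k : ℝ)) →
      (∑ i, (a i : ℝ) * x i ≤ (f : ℝ) - ∑ i, (b i : ℝ) * yhat i - 1) ∨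
        q y ≤ q yhat := by
  intro yhat hYhat hint
  choose kx hkx using hx
  choose ky hky using hint
  have hax : ∑ i, (a i : ℝ) * x i = ((∑ i, a i * kx i : ℤ) : ℝ) := by
    push_cast; exact Finset.sum_congr rfl fun i _ => by rw [hkx i]
  have hby : ∑ i, (b i : ℝ) * yhat i = ((∑ i, b i * ky i : ℤ) : ℝ) := by
    push_cast; exact Finset.sum_congr rfl fun i _ => by rw [hky i]
  set A : ℤ := ∑ i, a i * kx i
  set B : ℤ := ∑ i, b i * ky i
  rcases le_or_gt (A + B) (f - 1) with h | h
  · left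
    rw [hax, hby]
    have : (A : ℝ) + B ≤ (f : ℝ) - 1 := by exact_mod_cast h
    linarith
  · right
    have hf : f ≤ A + B := by omega
    exact hy.2 yhat ⟨hYhat, fun i => ⟨ky i, hky i⟩, by rw [hax, hby]; exact_mod_cast hf⟩
end

section
/- (Theorem 1.) Let P ⊆ ℝ^{n₁} × ℝ^{n₂} be a compact convex set and let (x*, y*) be an extreme point of P. Let ŷ ∈ ℝ^{n₂} satisfy a⋅x* + b⋅ŷ ≥ f and q(ŷ) < q(y*). Define D₁(ŷ) = {(x,y) : a⋅x ≤ f − b⋅ŷ − 1} and D₂(ŷ) = {(x,y) : q(y) ≤ q(ŷ)}, and let D(ŷ) = conv((P ∩ D₁(ŷ)) ∪ (P ∩ D₂(ŷ))). Then there exist α ∈ ℝ^{n₁}, β ∈ ℝ^{n₂} and τ ∈ ℝ such that α⋅x + β⋅y ≥ τ for every (x,y) ∈ D(ŷ), while α⋅x* + β⋅y* < τ; i.e., there is a disjunctive cut separating (x*, y*) from D(ŷ). -/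
/-!
Both pieces `P ∩ D₁(ŷ)` and `P ∩ D₂(ŷ)` are sublevel sets of continuous convex functions inside
the compact convex set `P`, hence compact and convex; the convex hull of the union of two compact
convex sets `A`, `B` is compact, being the image of `[0,1] × A × B` under
`(θ, u, v) ↦ (1 - θ) u + θ v`. Neither piece contains
`(x*, y*)`: the first because `a⋅x* + b⋅ŷ ≥ f`, the second because `q(ŷ) < q(y*)`. As
`(x*, y*)` is extreme, `P \ {(x*, y*)}` is convex, so it contains `D(ŷ)`. Strict separation of a
point from a closed convex set (Hahn–Banach) gives the cut.
-/

open Set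

theorem convexJoin_eq_image_Icc {E : Type*} [AddCommGroup E] [Module ℝ E] (s t : Set E) :
    convexJoin ℝ s t =
      (fun z : ℝ × E × E => (1 - z.1) • z.2.1 + z.1 • z.2.2) '' (Icc 0 1 ×ˢ s ×ˢ t) := by
  ext z
  simp only [mem_convexJoin, segment_eq_image, mem_image, mem_prod, Prod.exists]
  constructor
  · rintro ⟨x, hx, y, hy, θ, hθ, rfl⟩
    exact ⟨θ, x, y, ⟨hθ, hx, hy⟩, rfl⟩
  · rintro ⟨θ, x, y, ⟨hθ, hx, hy⟩, rfl⟩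
    exact ⟨x, hx, y, hy, θ, hθ, rfl⟩

section Compactness

variable {E : Type*} [AddCommGroup E] [Module ℝ E] [TopologicalSpace E]

theorem IsCompact.inter_setOf_le_of_convexOn {P : Set E} (hP : IsCompact P) (hPc : Convex ℝ P)
    {φ : E → ℝ} (hφ : Continuous φ) (hφc : ConvexOn ℝ univ φ) (r : ℝ) :
    IsCompact (P ∩ {p | φ p ≤ r}) ∧ Convex ℝ (P ∩ {p | φ p ≤ r}) :=
  ⟨hP.inter_right (isClosed_le hφ continuous_const),
    hPc.inter (by simpa only [sep_univ] using hφc.convex_le r)⟩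

variable [IsTopologicalAddGroup E] [ContinuousSMul ℝ E]

theorem IsCompact.convexJoin {s t : Set E} (hs : IsCompact s) (ht : IsCompact t) :
    IsCompact (convexJoin ℝ s t) := by
  rw [convexJoin_eq_image_Icc]
  exact (isCompact_Icc.prod (hs.prod ht)).image (by fun_prop)

theorem IsCompact.convexHull_union {s t : Set E} (hs : IsCompact s) (ht : IsCompact t)
    (hsc : Convex ℝ s) (htc : Convex ℝ t) : IsCompact (convexHull ℝ (s ∪ t)) := by
  rcases s.eq_empty_or_nonempty with rfl | hs₀
  · rwa [empty_union, htc.convexHull_eq]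
  rcases t.eq_empty_or_nonempty with rfl | ht₀
  · rwa [union_empty, hsc.convexHull_eq]
  rw [hsc.convexHull_union htc hs₀ ht₀]
  exact hs.convexJoin ht

end Compactness

theorem notMem_convexHull_of_mem_extremePoints {E : Type*} [AddCommGroup E] [Module ℝ E]
    {P K : Set E} {x : E} (hP : Convex ℝ P) (hx : x ∈ P.extremePoints ℝ) (hKP : K ⊆ P)
    (hxK : x ∉ K) : x ∉ convexHull ℝ K := fun hxK' =>
  (hP.mem_extremePoints_iff_mem_sdiff_convexHull_sdiff.1 hx).2
    (convexHull_mono (subset_sdiff_singleton hKP hxK) hxK')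

section Coordinates

variable {ι κ : Type*} [Fintype ι] [Fintype κ]

theorem convexOn_sum_mul (c : ι → ℝ) : ConvexOn ℝ univ fun y : ι → ℝ => ∑ i, c i * y i :=
  (dotProductBilin ℝ ℝ c).convexOn convex_univ

theorem convexOn_norm_sq_comp_add_sum_mul {F : Type*} [NormedAddCommGroup F] [NormedSpace ℝ F]
    (V : (ι → ℝ) →ₗ[ℝ] F) (g : ι → ℝ) :
    ConvexOn ℝ univ fun y => ‖V y‖ ^ 2 + ∑ i, g i * y i :=
  (((convexOn_norm convex_univ).pow (fun _ _ => norm_nonneg _) 2).comp_linearMap V).add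
    (convexOn_sum_mul g)

theorem LinearMap.exists_eq_sum_mul_add_sum_mul (L : (ι → ℝ) × (κ → ℝ) →ₗ[ℝ] ℝ) :
    ∃ (α : ι → ℝ) (β : κ → ℝ), ∀ p, L p = ∑ i, α i * p.1 i + ∑ j, β j * p.2 j := by
  classical
  refine ⟨(dotProductEquiv ℝ ι).symm (L ∘ₗ LinearMap.inl ℝ _ _),
    (dotProductEquiv ℝ κ).symm (L ∘ₗ LinearMap.inr ℝ _ _), fun p => ?_⟩
  have h₁ := congr($((dotProductEquiv ℝ ι).apply_symm_apply (L ∘ₗ LinearMap.inl ℝ _ _)) p.1)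
  have h₂ := congr($((dotProductEquiv ℝ κ).apply_symm_apply (L ∘ₗ LinearMap.inr ℝ _ _)) p.2)
  simp only [dotProductEquiv_apply_apply, LinearMap.comp_apply, LinearMap.inl_apply,
    LinearMap.inr_apply, dotProduct] at h₁ h₂
  rw [h₁, h₂, ← map_add, Prod.mk_add_mk, add_zero, zero_add]

theorem exists_sum_mul_separating_of_notMem {t : Set ((ι → ℝ) × (κ → ℝ))} (ht : Convex ℝ t)
    (ht' : IsClosed t) {x : (ι → ℝ) × (κ → ℝ)} (hx : x ∉ t) :
    ∃ (α : ι → ℝ) (β : κ → ℝ) (τ : ℝ),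
      (∀ p ∈ t, ∑ i, α i * p.1 i + ∑ j, β j * p.2 j ≥ τ) ∧
        ∑ i, α i * x.1 i + ∑ j, β j * x.2 j < τ := by
  obtain ⟨L, τ, hLx, hLt⟩ := geometric_hahn_banach_point_closed ht ht' hx
  obtain ⟨α, β, hL⟩ := (L : (ι → ℝ) × (κ → ℝ) →ₗ[ℝ] ℝ).exists_eq_sum_mul_add_sum_mul
  exact ⟨α, β, τ, fun p hp => ((hLt p hp).trans_eq (hL p)).le, (hL x).symm.trans_lt hLx⟩

end Coordinates

/-- **Theorem 1.** Let `P ⊆ ℝ^{n₁} × ℝ^{n₂}` be a compact convex set and let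
`(x*, y*)` be an extreme point of `P`. Let `ŷ` satisfy `a⋅x* + b⋅ŷ ≥ f` and
`q(ŷ) < q(y*)`, where `q(y) = ‖V y‖² + g⋅y`. Then there is a linear inequality
`α⋅x + β⋅y ≥ τ` valid for
`D(ŷ) = conv((P ∩ D₁(ŷ)) ∪ (P ∩ D₂(ŷ)))` and violated by `(x*, y*)`. -/
theorem stmt_4 {n₁ n₂ n₃ : ℕ} (a : Fin n₁ → ℝ) (b : Fin n₂ → ℝ) (f : ℝ)
    (V : (Fin n₂ → ℝ) →ₗ[ℝ] EuclideanSpace ℝ (Fin n₃)) (g : Fin n₂ → ℝ)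
    (q : (Fin n₂ → ℝ) → ℝ) (hq : ∀ y, q y = ‖V y‖ ^ 2 + ∑ i, g i * y i)
    (P : Set ((Fin n₁ → ℝ) × (Fin n₂ → ℝ)))
    (hPcomp : IsCompact P) (hPconv : Convex ℝ P)
    (xs : Fin n₁ → ℝ) (ys : Fin n₂ → ℝ)
    (hext : (xs, ys) ∈ Set.extremePoints ℝ P)
    (yhat : Fin n₂ → ℝ)
    (hfeas : ∑ i, a i * xs i + ∑ i, b i * yhat i ≥ f)
    (hbetter : q yhat < q ys) :
    ∃ (α : Fin n₁ → ℝ) (β : Fin n₂ → ℝ) (τ : ℝ),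
      (∀ p ∈ convexHull ℝ
          ((P ∩ {p : (Fin n₁ → ℝ) × (Fin n₂ → ℝ) |
              ∑ i, a i * p.1 i ≤ f - ∑ i, b i * yhat i - 1}) ∪
           (P ∩ {p : (Fin n₁ → ℝ) × (Fin n₂ → ℝ) | q p.2 ≤ q yhat})),
        ∑ i, α i * p.1 i + ∑ i, β i * p.2 i ≥ τ) ∧
      ∑ i, α i * xs i + ∑ i, β i * ys i < τ := by
  have hqc : Continuous q := by
    rw [show q = _ from funext hq]
    have := V.continuous_of_finiteDimensional
    fun_prop
  have hqconv : ConvexOn ℝ univ q := funext hq ▸ convexOn_norm_sq_comp_add_sum_mul V g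
  obtain ⟨hA, hAconv⟩ := hPcomp.inter_setOf_le_of_convexOn hPconv
    (φ := fun p => ∑ i, a i * p.1 i) (by fun_prop)
    ((convexOn_sum_mul a).comp_linearMap (LinearMap.fst ℝ _ _)) (f - ∑ i, b i * yhat i - 1)
  obtain ⟨hB, hBconv⟩ := hPcomp.inter_setOf_le_of_convexOn hPconv (φ := fun p => q p.2)
    (by fun_prop) (hqconv.comp_linearMap (LinearMap.snd ℝ _ _)) (q yhat)
  refine exists_sum_mul_separating_of_notMem (convex_convexHull ℝ _)
    (hA.convexHull_union hB hAconv hBconv).isClosed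
    (notMem_convexHull_of_mem_extremePoints hPconv hext
      (union_subset inter_subset_left inter_subset_left) ?_)
  rintro (⟨-, h⟩ | ⟨-, h⟩) <;> simp only [mem_ofPred_eq] at h <;> linarith
end
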